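/- arXiv:1807.09889 — 2 statements merged into one kernel-verified Lean document; each statement's English description precedes it below -/
import Mathlib

section
/- Let E be an elliptic curve and let D, D' be divisors on E with deg(inf{D, D'}) > 0, where inf and sup are taken coefficient-wise. Then H^0(E, O(D)) + H^0(E, O(D')) = H^0(E, O(sup{D, D'})), as subspaces of the function field k(E). -/
/-!
Both sides live in `|sup{D, D'}|`, and Riemann–Roch turns the modular identity
`deg (inf{D, D'}) + deg (sup{D, D'}) = deg D + deg D'` into
`dim (|D| + |D'|) = dim |D| + dim |D'| - dim (|D| ∩ |D'|) = dim |sup{D, D'}|`,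
using `|D| ∩ |D'| = |inf{D, D'}|`.
-/

/-- The degree of a divisor. -/
def degD {Pt : Type} (D : Pt →₀ ℤ) : ℤ := D.sum fun _ n => n

lemma degD_add {Pt : Type} (A B : Pt →₀ ℤ) : degD (A + B) = degD A + degD B :=
  Finsupp.sum_add_index' (fun _ => rfl) (fun _ _ _ => rfl)

lemma degD_mono {Pt : Type} : Monotone (degD (Pt := Pt)) := by
  intro A B hAB
  have hdiff : 0 ≤ degD (B - A) :=
    Finset.sum_nonneg fun x _ => sub_nonneg.mpr (hAB x)
  simpa [← degD_add] using add_le_add_left hdiff (degD A)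

lemma degD_inf_add_degD_sup {Pt : Type} (A B : Pt →₀ ℤ) :
    degD (A ⊓ B) + degD (A ⊔ B) = degD A + degD B := by
  rw [← degD_add, ← degD_add, inf_add_sup]

theorem Submodule.sup_eq_of_finrank_add_le {k V : Type*} [DivisionRing k] [AddCommGroup V]
    [Module k V] {U W T : Submodule k V} [FiniteDimensional k T] (hU : U ≤ T) (hW : W ≤ T)
    (hrank : Module.finrank k T + Module.finrank k ↥(U ⊓ W) ≤
      Module.finrank k U + Module.finrank k W) :
    U ⊔ W = T := by
  have := Submodule.finiteDimensional_of_le hU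
  have := Submodule.finiteDimensional_of_le hW
  refine Submodule.eq_of_le_of_finrank_le (sup_le hU hW) ?_
  have := Submodule.finrank_sup_add_finrank_inf_eq U W
  omega

theorem stmt_7_general (k K : Type) [Field k] [Field K] [Algebra k K]
    (Pt : Type)
    (sec : (Pt →₀ ℤ) → Submodule k K)
    -- Riemann–Roch on the elliptic curve:
    (hRR : ∀ D : Pt →₀ ℤ, 0 < degD D → (Module.finrank k (sec D) : ℤ) = degD D)
    -- `|D| ∩ |D'| = |inf{D, D'}|`:
    (hinf : ∀ D D' : Pt →₀ ℤ, sec (D ⊓ D') = sec D ⊓ sec D')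
    (D D' : Pt →₀ ℤ)
    (h : 0 < degD (D ⊓ D')) :
    sec D ⊔ sec D' = sec (D ⊔ D') := by
  have sec_mono : Monotone sec := OrderHomClass.mono (InfHom.mk sec hinf)
  have hD : 0 < degD D := h.trans_le (degD_mono inf_le_left)
  have hD' : 0 < degD D' := h.trans_le (degD_mono inf_le_right)
  have hsup : 0 < degD (D ⊔ D') := hD.trans_le (degD_mono le_sup_left)
  have rank_sup := hRR _ hsup
  -- `finrank` of an infinite-dimensional space is `0`, so positive rank means finite dimension.
  have : FiniteDimensional k (sec (D ⊔ D')) := Module.finite_of_finrank_pos (by omega)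
  refine Submodule.sup_eq_of_finrank_add_le (sec_mono le_sup_left) (sec_mono le_sup_right) ?_
  rw [← hinf]
  have := degD_inf_add_degD_sup D D'
  have := hRR D hD
  have := hRR D' hD'
  have := hRR _ h
  omega

theorem stmt_7 (k K : Type) [Field k] [IsAlgClosed k] [Field K] [Algebra k K]
    (Pt : Type)
    (sec : (Pt →₀ ℤ) → Submodule k K)
    (secFD : ∀ D, FiniteDimensional k (sec D))
    -- Riemann–Roch on the elliptic curve:
    (hRR : ∀ D : Pt →₀ ℤ, 0 < degD D → (Module.finrank k (sec D) : ℤ) = degD D)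
    -- `|D| ∩ |D'| = |inf{D, D'}|`:
    (hinf : ∀ D D' : Pt →₀ ℤ, sec (D ⊓ D') = sec D ⊓ sec D')
    (D D' : Pt →₀ ℤ)
    (h : 0 < degD (D ⊓ D')) :
    sec D ⊔ sec D' = sec (D ⊔ D') :=
  stmt_7_general k K Pt sec hRR hinf D D' h
end

section
/- Let R be a Z-graded k-algebra that is a domain, and suppose dim_k R_n ≥ 2 for some n ≥ 0 and R_{-a} ≠ 0 for some a > 0. Then R_0 contains an element α not in k, so R_0 contains a polynomial ring k[α]; in particular R is not finitely graded (dim_k R_0 = ∞). -/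
/-!
Let `x ≠ 0` have degree `n ≥ 0` and `y ≠ 0` degree `-a < 0`. Then `y ^ n * x ^ (a - 1)` is a
nonzero element of degree `-n`, and multiplication by it embeds `R_n` into `R_0`, so
`dim R_0 ≥ 2` and `R_0` contains some `α ∉ k`. As `k` is algebraically closed and `R` is a
domain, the minimal polynomial of an algebraic `α` would be linear, so `α` is transcendental
and its powers are linearly independent.
-/

theorem IsAlgClosed.transcendental_of_notMem_range {k R : Type*} [Field k] [IsAlgClosed k]
    [Ring R] [IsDomain R] [Algebra k R] {α : R} (hα : α ∉ Set.range (algebraMap k R)) :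
    Transcendental k α := fun halg =>
  hα <| minpoly.mem_range_of_degree_eq_one k α <|
    IsAlgClosed.degree_eq_one_of_irreducible k (minpoly.irreducible halg.isIntegral)

theorem Transcendental.linearIndependent_pow {k R : Type*} [CommRing k] [Ring R] [Algebra k R]
    {α : R} (h : Transcendental k α) : LinearIndependent k (fun n : ℕ => α ^ n) := by
  have := (Polynomial.basisMonomials k).linearIndependent.map'
    (Polynomial.aeval α).toLinearMap (LinearMap.ker_eq_bot.mpr (transcendental_iff_injective.mp h))
  simpa [Function.comp_def, Polynomial.coe_basisMonomials] using this

theorem Submodule.exists_mem_notMem_range_algebraMap {k R : Type*} [Field k] [Ring R]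
    [Algebra k R] {S : Submodule k R} (hS : 1 < Module.rank k S) :
    ∃ α ∈ S, α ∉ Set.range (algebraMap k R) := by
  by_contra! h
  have hle : S ≤ 1 := fun α hα => Submodule.mem_one.mpr (h α hα)
  have : Module.rank k S ≤ 1 := calc
    Module.rank k S ≤ Module.rank k (1 : Submodule k R) := Submodule.rank_mono hle
    _ ≤ 1 := by rw [Submodule.one_eq_span]; simpa using rank_span_le (R := k) ({1} : Set R)
  exact this.not_gt hS

theorem Submodule.not_finite_of_linearIndependent {k R ι : Type*} [Field k] [AddCommGroup R]
    [Module k R] [Infinite ι] {S : Submodule k R} {v : ι → R} (hv : LinearIndependent k v)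
    (hvS : ∀ i, v i ∈ S) : ¬ Module.Finite k S := fun _ =>
  Module.Finite.not_linearIndependent_of_infinite (fun i => (⟨v i, hvS i⟩ : S))
    (LinearIndependent.of_comp S.subtype hv)

section Graded

variable {ι k R : Type*} [CommRing k] [Ring R] [Algebra k R]

theorem rank_le_rank_add_of_mem_graded [AddMonoid ι] [NoZeroDivisors R]
    (𝒜 : ι → Submodule k R) [SetLike.GradedMonoid 𝒜] {i j : ι} {w : R} (hw : w ∈ 𝒜 i)
    (hw0 : w ≠ 0) : Module.rank k (𝒜 j) ≤ Module.rank k (𝒜 (i + j)) :=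
  LinearMap.rank_le_of_injective
    ((LinearMap.mulLeft k w).restrict fun _ hz => SetLike.mul_mem_graded hw hz)
    fun _ _ h => Subtype.ext (mul_left_cancel₀ hw0 (congrArg Subtype.val h))

theorem pow_mul_pow_mem_neg_graded (𝒜 : ℤ → Submodule k R) [SetLike.GradedMonoid 𝒜]
    {n m : ℕ} {x y : R} (hx : x ∈ 𝒜 n) (hy : y ∈ 𝒜 (-(m + 1))) : y ^ n * x ^ m ∈ 𝒜 (-n) := by
  convert SetLike.mul_mem_graded (SetLike.pow_mem_graded n hy) (SetLike.pow_mem_graded m hx)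
    using 2
  simp only [nsmul_eq_mul]
  ring

end Graded

theorem stmt_16 (k : Type) [Field k] [IsAlgClosed k]
    (R : Type) [Ring R] [Algebra k R] [IsDomain R]
    (𝒜 : ℤ → Submodule k R) [GradedRing 𝒜]
    (hbig : ∃ n : ℤ, 0 ≤ n ∧ 2 ≤ Module.rank k (𝒜 n))
    (hneg : ∃ a : ℤ, 0 < a ∧ 𝒜 (-a) ≠ ⊥) :
    (∃ α : R, α ∈ 𝒜 0 ∧ α ∉ Set.range (algebraMap k R) ∧
        LinearIndependent k (fun n : ℕ => α ^ n)) ∧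
    ¬ FiniteDimensional k (𝒜 0) := by
  obtain ⟨n, hn, hrank⟩ := hbig
  lift n to ℕ using hn
  obtain ⟨a, ha, hA⟩ := hneg
  obtain ⟨m, rfl⟩ := Int.eq_succ_of_zero_lt ha
  obtain ⟨y, hy, hy0⟩ := (Submodule.ne_bot_iff _).mp hA
  obtain ⟨x, hx, hx0⟩ := (Submodule.ne_bot_iff _).mp
    (mt Submodule.rank_eq_zero.mpr (zero_lt_two.trans_le hrank).ne')
  have hrank0 : 1 < Module.rank k (𝒜 0) := calc
    1 < Module.rank k (𝒜 n) := Cardinal.one_lt_two.trans_le hrank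
    _ ≤ Module.rank k (𝒜 (-n + n)) :=
      rank_le_rank_add_of_mem_graded 𝒜 (pow_mul_pow_mem_neg_graded 𝒜 hx hy)
        (mul_ne_zero (pow_ne_zero _ hy0) (pow_ne_zero _ hx0))
    _ = Module.rank k (𝒜 0) := by rw [neg_add_cancel]
  obtain ⟨α, hα, hαk⟩ := Submodule.exists_mem_notMem_range_algebraMap hrank0
  have hli := (IsAlgClosed.transcendental_of_notMem_range hαk).linearIndependent_pow
  refine ⟨⟨α, hα, hαk, hli⟩, Submodule.not_finite_of_linearIndependent hli fun i => ?_⟩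
  simpa using SetLike.pow_mem_graded i hα
end
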